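/- arXiv:2006.05587 — 2 statements merged into one kernel-verified Lean document; each statement's English description precedes it below -/
import Mathlib

section
/- For a finite probability space with binary label y and a sequence x^(1),...,x^(t) (t ≥ 3) that is a first-order Markov chain conditionally on y (i.e., p(x^(s)|x^(s-1),...,x^(1),y) = p(x^(s)|x^(s-1),y) for all s ≥ 2), the log-likelihood ratio satisfies log(p(x^(1),...,x^(t)|y=1)/p(x^(1),...,x^(t)|y=0)) = Σ_{s=2}^t log(p(y=1|x^(s),x^(s-1))/p(y=0|x^(s),x^(s-1))) − Σ_{s=3}^t log(p(y=1|x^(s-1))/p(y=0|x^(s-1))) − log(p(y=1)/p(y=0)), assuming all relevant probabilities are positive. -/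
/-!
The Markov factorization writes the log-likelihood of `y` as `log p(x⁽¹⁾|y)` plus a sum of
doublet terms `log p(x⁽ˢ⁻¹⁾, x⁽ˢ⁾|y)` minus singlet terms `log p(x⁽ˢ⁻¹⁾|y)`; in the likelihood
ratio the `s = 2` singlet cancels `p(x⁽¹⁾|y)`. By Bayes' rule each likelihood ratio is a posterior
ratio divided by the prior ratio (the evidence cancels), and the prior ratio then occurs
`(t - 1) - (t - 2) = 1` times.
-/

open Finset Real

lemma Real.log_mul_prod_div {ι : Type*} (s : Finset ι) {a : ℝ} {f g : ι → ℝ} (ha : a ≠ 0)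
    (hf : ∀ i ∈ s, f i ≠ 0) (hg : ∀ i ∈ s, g i ≠ 0) :
    log (a * ∏ i ∈ s, f i / g i) = log a + ∑ i ∈ s, (log (f i) - log (g i)) := by
  have hfg : ∀ i ∈ s, f i / g i ≠ 0 := fun i hi => div_ne_zero (hf i hi) (hg i hi)
  rw [log_mul ha (prod_ne_zero_iff.mpr hfg), log_prod hfg]
  exact congrArg _ (sum_congr rfl fun i hi => log_div (hf i hi) (hg i hi))

lemma Real.log_bayes_odds {a b p q m : ℝ} (ha : a ≠ 0) (hb : b ≠ 0) (hp : p ≠ 0) (hq : q ≠ 0)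
    (hm : m ≠ 0) : log (a * p / m / (b * q / m)) = log (a / b) + log (p / q) := by
  rw [← log_mul (div_ne_zero ha hb) (div_ne_zero hp hq)]
  congr 1
  field_simp

/-- For the observed sequence, `single s y = p(x⁽ˢ⁾ | y)` and `pair s y = p(x⁽ˢ⁻¹⁾, x⁽ˢ⁾ | y)`,
`margS s = p(x⁽ˢ⁾)`, `margP s = p(x⁽ˢ⁻¹⁾, x⁽ˢ⁾)`, `prior y = p(y)`, and `post1`, `post2` are the
Bayes posteriors of `y` given the singlet and the doublet; `hjoint` is the chain rule for a
first-order Markov chain. -/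
theorem sprt_tandem_first_order_llr
    (t : ℕ) (ht : 3 ≤ t)
    (joint : Bool → ℝ) (single : ℕ → Bool → ℝ) (pair : ℕ → Bool → ℝ)
    (margS : ℕ → ℝ) (margP : ℕ → ℝ) (prior : Bool → ℝ)
    (post1 : ℕ → Bool → ℝ) (post2 : ℕ → Bool → ℝ)
    (hpost1 : ∀ s y, post1 s y = single s y * prior y / margS s)
    (hpost2 : ∀ s y, post2 s y = pair s y * prior y / margP s)
    (hjoint : ∀ y, joint y
      = single 1 y * ∏ s ∈ Finset.Icc 2 t, (pair s y / single (s - 1) y))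
    (hsingle : ∀ s y, 0 < single s y) (hpair : ∀ s y, 0 < pair s y)
    (hmargS : ∀ s, 0 < margS s) (hmargP : ∀ s, 0 < margP s)
    (hprior : ∀ y, 0 < prior y) :
    Real.log (joint true / joint false)
      = (∑ s ∈ Finset.Icc 2 t, Real.log (post2 s true / post2 s false))
        - (∑ s ∈ Finset.Icc 3 t, Real.log (post1 (s - 1) true / post1 (s - 1) false))
        - Real.log (prior true / prior false) := by
  have hsingle₀ s y := (hsingle s y).ne'
  have hpair₀ s y := (hpair s y).ne'
  have hprior₀ y := (hprior y).ne'
  have hlog_joint y : log (joint y)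
      = log (single 1 y) + ∑ s ∈ Icc 2 t, (log (pair s y) - log (single (s - 1) y)) := by
    rw [hjoint, log_mul_prod_div _ (hsingle₀ 1 y) (fun s _ => hpair₀ s y)
      (fun s _ => hsingle₀ (s - 1) y)]
  have hjoint₀ y : joint y ≠ 0 := by
    rw [hjoint]
    exact mul_ne_zero (hsingle₀ 1 y) (prod_ne_zero_iff.mpr fun s _ =>
      div_ne_zero (hpair₀ s y) (hsingle₀ (s - 1) y))
  have hsplit : Icc 2 t = insert 2 (Icc 3 t) := (insert_Icc_add_one_left_eq_Icc (by omega)).symm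
  simp only [hpost1, hpost2, log_bayes_odds (hsingle₀ _ _) (hsingle₀ _ _) (hprior₀ _)
    (hprior₀ _) (hmargS _).ne', log_bayes_odds (hpair₀ _ _) (hpair₀ _ _) (hprior₀ _)
    (hprior₀ _) (hmargP _).ne', log_div (hjoint₀ true) (hjoint₀ false), hlog_joint, hsplit,
    sum_insert (show 2 ∉ Icc 3 t by simp), log_div (hsingle₀ _ _) (hsingle₀ _ _),
    log_div (hpair₀ _ _) (hpair₀ _ _), sum_add_distrib, sum_sub_distrib]
  ring
end

section
/- (Neyman–Pearson lemma) Let P_0, P_1 have densities p_0, p_1 with respect to a measure μ, and let d*(x) = 1{p_1(x) ≥ h·p_0(x)} for some h ≥ 0. If d: X → [0,1] is any (possibly randomized) test with ∫ d·p_0 dμ ≤ ∫ d*·p_0 dμ, then ∫ d·p_1 dμ ≤ ∫ d*·p_1 dμ. -/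
/-!
The test `d*` maximises the Lagrangian `∫ d (p₁ - h p₀) dμ` over all tests `d`, because pointwise
`d* - d` and `p₁ - h p₀` have the same sign. Hence
`(power d* - power d) - h (size d* - size d) ≥ 0`, and `h ≥ 0` together with `size d ≤ size d*`
gives `power d ≤ power d*`.
-/

open MeasureTheory

lemma mul_sub_le_ite_mul_sub {t a c : ℝ} (ht : t ∈ Set.Icc (0 : ℝ) 1) :
    t * (a - c) ≤ (if c ≤ a then 1 else 0) * (a - c) := by
  split_ifs with hca
  · simpa using mul_le_mul_of_nonneg_right ht.2 (sub_nonneg.mpr hca)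
  · simpa using mul_le_mul_of_nonpos_right ht.1 (by linarith : a - c ≤ 0)

lemma MeasureTheory.Integrable.mul_of_mem_Icc {X : Type*} [MeasurableSpace X] {μ : Measure X}
    {d p : X → ℝ} (hp : Integrable p μ) (hd : AEStronglyMeasurable d μ)
    (hd01 : ∀ x, d x ∈ Set.Icc (0 : ℝ) 1) :
    Integrable (fun x => d x * p x) μ :=
  hp.bdd_mul hd (c := 1) <| ae_of_all _ fun x => by
    rw [Real.norm_eq_abs, abs_le]
    exact ⟨by linarith [(hd01 x).1], (hd01 x).2⟩

namespace NeymanPearson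

variable {X : Type*} {p0 p1 : X → ℝ} {h : ℝ}

noncomputable def lrTest (h : ℝ) (p0 p1 : X → ℝ) (x : X) : ℝ :=
  if h * p0 x ≤ p1 x then 1 else 0

lemma lrTest_mem_Icc (x : X) : lrTest h p0 p1 x ∈ Set.Icc (0 : ℝ) 1 := by
  unfold lrTest
  split_ifs <;> simp

variable [MeasurableSpace X] {μ : Measure X}

lemma measurable_lrTest (hm0 : Measurable p0) (hm1 : Measurable p1) :
    Measurable (lrTest h p0 p1) :=
  Measurable.ite (measurableSet_le (hm0.const_mul h) hm1) measurable_const measurable_const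

lemma integral_mul_sub_const_mul {d : X → ℝ} (h : ℝ)
    (hi0 : Integrable (fun x => d x * p0 x) μ) (hi1 : Integrable (fun x => d x * p1 x) μ) :
    ∫ x, d x * (p1 x - h * p0 x) ∂μ = ∫ x, d x * p1 x ∂μ - h * ∫ x, d x * p0 x ∂μ := by
  simp_rw [mul_sub, mul_left_comm (d _) h]
  rw [integral_sub hi1 (hi0.const_mul h), integral_const_mul]

lemma power_sub_mul_size_le_lrTest (hm0 : Measurable p0) (hm1 : Measurable p1)
    (hi0 : Integrable p0 μ) (hi1 : Integrable p1 μ) {d : X → ℝ}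
    (hd : AEStronglyMeasurable d μ) (hd01 : ∀ x, d x ∈ Set.Icc (0 : ℝ) 1) :
    ∫ x, d x * p1 x ∂μ - h * ∫ x, d x * p0 x ∂μ ≤
      ∫ x, lrTest h p0 p1 x * p1 x ∂μ - h * ∫ x, lrTest h p0 p1 x * p0 x ∂μ := by
  have hstar : AEStronglyMeasurable (lrTest h p0 p1) μ :=
    (measurable_lrTest hm0 hm1).aestronglyMeasurable
  have hq : Integrable (fun x => p1 x - h * p0 x) μ := hi1.sub (hi0.const_mul h)
  rw [← integral_mul_sub_const_mul h (hi0.mul_of_mem_Icc hd hd01) (hi1.mul_of_mem_Icc hd hd01),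
    ← integral_mul_sub_const_mul h (hi0.mul_of_mem_Icc hstar lrTest_mem_Icc)
      (hi1.mul_of_mem_Icc hstar lrTest_mem_Icc)]
  exact integral_mono (hq.mul_of_mem_Icc hd hd01) (hq.mul_of_mem_Icc hstar lrTest_mem_Icc)
    fun x => mul_sub_le_ite_mul_sub (hd01 x)

end NeymanPearson

theorem neyman_pearson_lemma_general
    {X : Type*} [MeasurableSpace X] (μ : Measure X)
    (p0 p1 : X → ℝ)
    (hm0 : Measurable p0) (hm1 : Measurable p1)
    (hi0 : Integrable p0 μ) (hi1 : Integrable p1 μ)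
    (h : ℝ) (hh : 0 ≤ h)
    (dstar : X → ℝ) (hdstar : ∀ x, dstar x = if h * p0 x ≤ p1 x then 1 else 0)
    (d : X → ℝ) (hd : Measurable d) (hd01 : ∀ x, d x ∈ Set.Icc (0:ℝ) 1)
    (hsize : ∫ x, d x * p0 x ∂μ ≤ ∫ x, dstar x * p0 x ∂μ) :
    ∫ x, d x * p1 x ∂μ ≤ ∫ x, dstar x * p1 x ∂μ := by
  obtain rfl : dstar = NeymanPearson.lrTest h p0 p1 := funext hdstar
  have hlagrange := NeymanPearson.power_sub_mul_size_le_lrTest (μ := μ) (h := h) hm0 hm1 hi0 hi1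
    hd.aestronglyMeasurable hd01
  linarith [mul_le_mul_of_nonneg_left hsize hh]

/-- Neyman–Pearson lemma. With densities `p₀, p₁` w.r.t. `μ`,
the deterministic test `d*(x) = 1{p₁(x) ≥ h p₀(x)}` is most powerful among all
(possibly randomized) tests `d : X → [0,1]` of no larger size: if
`∫ d p₀ dμ ≤ ∫ d* p₀ dμ` then `∫ d p₁ dμ ≤ ∫ d* p₁ dμ`. -/
theorem neyman_pearson_lemma
    {X : Type*} [MeasurableSpace X] (μ : Measure X)
    (p0 p1 : X → ℝ) (hp0 : ∀ x, 0 ≤ p0 x) (hp1 : ∀ x, 0 ≤ p1 x)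
    (hm0 : Measurable p0) (hm1 : Measurable p1)
    (hi0 : Integrable p0 μ) (hi1 : Integrable p1 μ)
    (h : ℝ) (hh : 0 ≤ h)
    (dstar : X → ℝ) (hdstar : ∀ x, dstar x = if h * p0 x ≤ p1 x then 1 else 0)
    (d : X → ℝ) (hd : Measurable d) (hd01 : ∀ x, d x ∈ Set.Icc (0:ℝ) 1)
    (hsize : ∫ x, d x * p0 x ∂μ ≤ ∫ x, dstar x * p0 x ∂μ) :
    ∫ x, d x * p1 x ∂μ ≤ ∫ x, dstar x * p1 x ∂μ :=
  neyman_pearson_lemma_general μ p0 p1 hm0 hm1 hi0 hi1 h hh dstar hdstar d hd hd01 hsize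
end
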